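/- The f-product of hoops is associative up to isomorphism: given hoops A, B, C, a product morphism g: C → B, and a product morphism f: (B ⋉_g C) → A, define f̄: B → A by f̄(b) = f(b,1) and ḡ: C → A ⋉_f̄ B by ḡ(c) = (f(g(c),c), g(c)); then f̄ and ḡ are product morphisms and (A ⋉_f̄ B) ⋉_ḡ C ≅ A ⋉_f (B ⋉_g C), via the map Γ(a,(b,c)) = ((a,b),c). -/
import Mathlib


/-- A hoop: a commutative monoid with a residuation-like arrow satisfying
(H1) `x → x = 1`, (H2) `(x·y) → z = x → (y → z)`, (H3) `x·(x→y) = y·(y→x)`. -/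
class Hoop (α : Type*) extends CommMonoid α where
  arr : α → α → α
  arr_self : ∀ x : α, arr x x = 1
  arr_mul : ∀ x y z : α, arr (x * y) z = arr x (arr y z)
  divis : ∀ x y : α, x * arr x y = y * arr y x

namespace Hoop

variable {α β γ : Type*} [Hoop α] [Hoop β] [Hoop γ]

/-- The induced order: `x ≤ y` iff `x → y = 1`. -/
def hle (x y : α) : Prop := arr x y = 1

/-- The induced meet: `x ∧ y = x·(x → y)`. -/
def hmeet (x y : α) : α := x * arr x y

/-- A product morphism of hoops: `f 1 = 1` and
`f x · f y = f (x·y) = f x ∧ f y = f (x ∧ y)`. -/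
def IsProdMorphism {α β : Type*} [Hoop α] [Hoop β] (f : α → β) : Prop :=
  f 1 = 1 ∧ ∀ x y : α,
    f x * f y = f (x * y) ∧ f (x * y) = hmeet (f x) (f y) ∧
      hmeet (f x) (f y) = f (hmeet x y)

/-- The underlying set of the `f`-product `A ⋉_f B`: pairs `(a, x)` with `a ≤ f x`. -/
def FSet {α β : Type*} [Hoop α] [Hoop β] (f : β → α) : Set (α × β) :=
  {p | hle p.1 (f p.2)}

/-- The multiplication of the `f`-product: componentwise. -/
def fmul (p q : α × β) : α × β := (p.1 * q.1, p.2 * q.2)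

/-- The arrow of the `f`-product: `(a,x) → (b,y) = (f(x→y) ∧ (a→b), x→y)`. -/
def farr (f : β → α) (p q : α × β) : α × β :=
  (hmeet (f (arr p.2 q.2)) (arr p.1 q.1), arr p.2 q.2)

/-- `f̄ : B → A`, `f̄ b = f (b, 1)`. -/
def fbar {g : γ → β} (f : ↥(FSet g) → α)
    (hb1 : ∀ b : β, ((b, (1 : γ)) : β × γ) ∈ FSet g) : β → α :=
  fun b => f ⟨(b, 1), hb1 b⟩

/-- `ḡ : C → A ⋉_f̄ B`, `ḡ c = (f (g c, c), g c)`. -/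
def gbar {g : γ → β} (f : ↥(FSet g) → α)
    (hb1 : ∀ b : β, ((b, (1 : γ)) : β × γ) ∈ FSet g)
    (hgc : ∀ c : γ, ((g c, c) : β × γ) ∈ FSet g)
    (hgm : ∀ c : γ, ((f ⟨(g c, c), hgc c⟩, g c) : α × β) ∈ FSet (fbar f hb1)) :
    γ → ↥(FSet (fbar f hb1)) :=
  fun c => ⟨(f ⟨(g c, c), hgc c⟩, g c), hgm c⟩

/-! ### Auxiliary lemmas: basic hoop theory -/

section BasicLemmas
variable {α' : Type*} [Hoop α']

lemma arr_comm_left (x y z : α') : arr x (arr y z) = arr y (arr x z) := by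
  rw [← arr_mul, mul_comm, arr_mul]

lemma one_arr_aux (x : α') : arr 1 x = x * arr x 1 := by
  have h := divis (1 : α') x
  rwa [one_mul] at h

lemma arr_one (x : α') : arr x 1 = 1 := by
  have e9 : ∀ y : α', arr (y * arr y 1) 1 = 1 := fun y => by
    rw [mul_comm, arr_mul, arr_self]
  have e9' : ∀ y : α', arr (arr 1 y) 1 = 1 := fun y => by
    rw [one_arr_aux]; exact e9 y
  have e12 : ∀ y : α', arr (arr y 1) 1 = 1 := fun y => by
    have h : arr 1 (arr y 1) = arr y 1 := by
      rw [arr_comm_left, arr_self]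
    rw [← h]; exact e9' (arr y 1)
  have hxt : arr x (arr 1 x) = 1 := by
    rw [arr_comm_left, arr_self, arr_self]
  have e6 : arr 1 x * arr (arr 1 x) x = x := by
    have hd := divis (arr 1 x) x
    rwa [hxt, mul_one] at hd
  have e7 : arr (arr 1 x) x = arr (arr x 1) 1 := by
    rw [one_arr_aux, mul_comm, arr_mul, arr_self]
  calc arr x 1 = arr (arr 1 x * arr (arr 1 x) x) 1 := by rw [e6]
    _ = arr (arr 1 x) (arr (arr (arr 1 x) x) 1) := arr_mul _ _ _
    _ = arr (arr 1 x) (arr (arr (arr x 1) 1) 1) := by rw [e7]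
    _ = arr (arr 1 x) (1 : α') := by rw [e12]
    _ = 1 := e9' x

lemma one_arr (x : α') : arr 1 x = x := by
  rw [one_arr_aux, arr_one, mul_one]

lemma hle_refl (x : α') : hle x x := arr_self x

lemma hle_top (x : α') : hle x 1 := arr_one x

lemma hle_antisymm {x y : α'} (h1 : hle x y) (h2 : hle y x) : x = y := by
  have h := divis x y
  rwa [h1, h2, mul_one, mul_one] at h

lemma mul_arr_of_hle {x y : α'} (h : hle x y) : y * arr y x = x := by
  have hd := divis x y
  rw [h, mul_one] at hd
  exact hd.symm

lemma hle_trans {x y z : α'} (h1 : hle x y) (h2 : hle y z) : hle x z := by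
  unfold hle
  rw [← mul_arr_of_hle h1, mul_comm, arr_mul, h2, arr_one]

lemma hle_resid {x y z : α'} : hle (x * y) z ↔ hle x (arr y z) := by
  unfold hle; rw [arr_mul]

lemma mul_arr_hle (x y : α') : hle (x * arr x y) y := by
  unfold hle; rw [mul_comm, arr_mul, arr_self]

lemma hle_mul_left (x y : α') : hle (x * y) x := by
  unfold hle; rw [mul_comm, arr_mul, arr_self, arr_one]

lemma hle_mul_right (x y : α') : hle (x * y) y := by
  rw [mul_comm]; exact hle_mul_left y x

lemma hle_mul_mono_right {y z : α'} (h : hle y z) (x : α') : hle (x * y) (x * z) := by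
  have hz : hle z (arr x (x * z)) := hle_resid.mp (by rw [mul_comm]; exact hle_refl _)
  rw [mul_comm x y]
  exact hle_resid.mpr (hle_trans h hz)

lemma hle_mul_mono {a b x y : α'} (h1 : hle a x) (h2 : hle b y) : hle (a * b) (x * y) := by
  refine hle_trans (hle_mul_mono_right h2 a) ?_
  rw [mul_comm a y, mul_comm x y]
  exact hle_mul_mono_right h1 y

lemma arr_mono_right {z y : α'} (h : hle z y) (x : α') : hle (arr x z) (arr x y) :=
  hle_resid.mp (hle_trans (by rw [mul_comm]; exact mul_arr_hle x z) h)

lemma hle_arr_right (x y : α') : hle y (arr x y) := by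
  unfold hle; rw [arr_comm_left, arr_self, arr_one]

lemma hmeet_le_left (x y : α') : hle (hmeet x y) x := hle_mul_left x _

lemma hmeet_le_right (x y : α') : hle (hmeet x y) y := mul_arr_hle x y

lemma hle_hmeet {z x y : α'} (h1 : hle z x) (h2 : hle z y) : hle z (hmeet x y) := by
  have h := hle_mul_mono_right (arr_mono_right h2 x) x
  rwa [mul_arr_of_hle h1] at h

lemma hle_hmeet_iff {z x y : α'} : hle z (hmeet x y) ↔ hle z x ∧ hle z y :=
  ⟨fun h => ⟨hle_trans h (hmeet_le_left x y), hle_trans h (hmeet_le_right x y)⟩,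
   fun h => hle_hmeet h.1 h.2⟩

lemma hmeet_one (x : α') : hmeet x 1 = x := by
  unfold hmeet; rw [arr_one, mul_one]

lemma one_hmeet (x : α') : hmeet 1 x = x := by
  unfold hmeet; rw [one_mul, one_arr]

lemma hmeet_assoc (x y z : α') : hmeet (hmeet x y) z = hmeet x (hmeet y z) := by
  apply hle_antisymm
  · exact hle_hmeet (hle_trans (hmeet_le_left _ _) (hmeet_le_left x y))
      (hle_hmeet (hle_trans (hmeet_le_left _ _) (hmeet_le_right x y))
        (hmeet_le_right _ _))
  · exact hle_hmeet
      (hle_hmeet (hmeet_le_left _ _) (hle_trans (hmeet_le_right _ _) (hmeet_le_left y z)))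
      (hle_trans (hmeet_le_right _ _) (hmeet_le_right y z))

lemma idem_mul_of_hle {e m : α'} (he : e * e = e) (h : hle m e) : e * m = m := by
  have hm := mul_arr_of_hle h
  calc e * m = e * (e * arr e m) := by rw [hm]
    _ = e * e * arr e m := (mul_assoc _ _ _).symm
    _ = e * arr e m := by rw [he]
    _ = m := hm

lemma idem_hmeet {e : α'} (he : e * e = e) (w : α') : hmeet e w = e * w := by
  apply hle_antisymm
  · have h1 := idem_mul_of_hle he (hmeet_le_left e w)
    have h2 := hle_mul_mono_right (hmeet_le_right e w) e
    rwa [h1] at h2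
  · exact hle_hmeet (hle_mul_left e w) (hle_mul_right e w)

end BasicLemmas

section PMLemmas
variable {α' β' : Type*} [Hoop α'] [Hoop β'] {f : β' → α'}

lemma pm_mul (hf : IsProdMorphism f) (x y : β') : f x * f y = f (x * y) := (hf.2 x y).1

lemma pm_meet1 (hf : IsProdMorphism f) (x y : β') : f (x * y) = hmeet (f x) (f y) :=
  (hf.2 x y).2.1

lemma pm_meet2 (hf : IsProdMorphism f) (x y : β') : hmeet (f x) (f y) = f (hmeet x y) :=
  (hf.2 x y).2.2

lemma pm_idem (hf : IsProdMorphism f) (x : β') : f x * f x = f x := by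
  calc f x * f x = hmeet (f x) (f x) := (pm_mul hf x x).trans (pm_meet1 hf x x)
    _ = f x := by unfold hmeet; rw [arr_self, mul_one]

lemma pm_mono (hf : IsProdMorphism f) {x y : β'} (h : hle x y) : hle (f x) (f y) := by
  have hx : hmeet x y = x := by unfold hmeet; rw [h, mul_one]
  have h2 : f x = hmeet (f x) (f y) := by rw [pm_meet2 hf, hx]
  rw [h2]
  exact hmeet_le_right _ _

/-- The key computation (★): if `b ≤ f y` then
`a · (f(x→y) ∧ (a→b)) = a ∧ b`. -/
lemma pm_star (hf : IsProdMorphism f) {a b : α'} {x y : β'} (hb : hle b (f y)) :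
    a * hmeet (f (arr x y)) (arr a b) = hmeet a b := by
  have he := pm_idem hf (arr x y)
  have hme : hle (hmeet a b) (f (arr x y)) :=
    hle_trans (hmeet_le_right a b) (hle_trans hb (pm_mono hf (hle_arr_right x y)))
  rw [idem_hmeet he]
  calc a * (f (arr x y) * arr a b) = f (arr x y) * (a * arr a b) := mul_left_comm _ _ _
    _ = f (arr x y) * hmeet a b := rfl
    _ = hmeet a b := idem_mul_of_hle he hme

end PMLemmas

section MemLemmas
variable {α' β' γ' : Type*} [Hoop α'] [Hoop β'] [Hoop γ'] {g : γ' → β'}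

lemma mem_fset_iff {p : β' × γ'} : p ∈ FSet g ↔ hle p.1 (g p.2) := Iff.rfl

lemma mem_fmul (hg : IsProdMorphism g) {p q : β' × γ'} (hp : p ∈ FSet g)
    (hq : q ∈ FSet g) : fmul p q ∈ FSet g := by
  have h := hle_mul_mono (mem_fset_iff.mp hp) (mem_fset_iff.mp hq)
  rw [pm_mul hg] at h
  exact h

lemma mem_farr (p q : β' × γ') : farr g p q ∈ FSet g := hmeet_le_left _ _

lemma mem_fmul_farr (hg : IsProdMorphism g) {p : β' × γ'} (q : β' × γ')
    (hp : p ∈ FSet g) : fmul p (farr g p q) ∈ FSet g :=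
  mem_fmul hg hp (mem_farr p q)

lemma fcong {α'' : Type*} (f : ↥(FSet g) → α'') {v w : β' × γ'} (hv : v ∈ FSet g)
    (hw : w ∈ FSet g) (h : v = w) : f ⟨v, hv⟩ = f ⟨w, hw⟩ := by subst h; rfl

end MemLemmas

/-- Associativity of the `f`-product: given a product morphism `g : C → B` and a
product morphism `f : B ⋉_g C → A`, the maps `f̄ b = f (b,1)` and
`ḡ c = (f (g c, c), g c)` are product morphisms and the rebracketing
`Γ (a,(b,c)) = ((a,b),c)` is an isomorphism
`A ⋉_f (B ⋉_g C) ≅ (A ⋉_f̄ B) ⋉_ḡ C`. -/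
theorem fprod_assoc
    {g : γ → β} (hg : IsProdMorphism g)
    (f : ↥(FSet g) → α)
    -- `f` is a product morphism on the hoop `B ⋉_g C`
    (hmem1 : (((1 : β), (1 : γ)) : β × γ) ∈ FSet g)
    (hf1 : f ⟨(1, 1), hmem1⟩ = 1)
    (hf2 : ∀ (p q : ↥(FSet g)) (hm : fmul p.val q.val ∈ FSet g)
        (hw : fmul p.val (farr g p.val q.val) ∈ FSet g),
      f p * f q = f ⟨fmul p.val q.val, hm⟩ ∧
      f ⟨fmul p.val q.val, hm⟩ = hmeet (f p) (f q) ∧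
      hmeet (f p) (f q) = f ⟨fmul p.val (farr g p.val q.val), hw⟩)
    (hb1 : ∀ b : β, ((b, (1 : γ)) : β × γ) ∈ FSet g)
    (hgc : ∀ c : γ, ((g c, c) : β × γ) ∈ FSet g)
    (hgm : ∀ c : γ, ((f ⟨(g c, c), hgc c⟩, g c) : α × β) ∈ FSet (fbar f hb1)) :
    -- (1) `f̄` is a product morphism from `B` to `A`
    IsProdMorphism (fbar f hb1) ∧
    -- (2) `ḡ` is a product morphism from `C` to the hoop `A ⋉_f̄ B`
    ((gbar f hb1 hgc hgm 1).val = ((1 : α), (1 : β)) ∧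
      ∀ c d : γ,
        (gbar f hb1 hgc hgm (c * d)).val
            = fmul (gbar f hb1 hgc hgm c).val (gbar f hb1 hgc hgm d).val ∧
        fmul (gbar f hb1 hgc hgm c).val (gbar f hb1 hgc hgm d).val
            = fmul (gbar f hb1 hgc hgm c).val
                (farr (fbar f hb1) (gbar f hb1 hgc hgm c).val (gbar f hb1 hgc hgm d).val) ∧
        (gbar f hb1 hgc hgm (hmeet c d)).val
            = fmul (gbar f hb1 hgc hgm c).val
                (farr (fbar f hb1) (gbar f hb1 hgc hgm c).val (gbar f hb1 hgc hgm d).val)) ∧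
    -- (3) `Γ` is a bijection between the underlying sets
    (∀ (a : α) (b : β) (c : γ) (hbc : ((b, c) : β × γ) ∈ FSet g),
      hle a (f ⟨(b, c), hbc⟩) ↔
        (((a, b) : α × β) ∈ FSet (fbar f hb1) ∧
          farr (fbar f hb1) (a, b) (gbar f hb1 hgc hgm c).val = ((1 : α), (1 : β)))) ∧
    -- (4) `Γ` transports the arrow of `A ⋉_f (B ⋉_g C)` to the arrow of
    --     `(A ⋉_f̄ B) ⋉_ḡ C` (the second coordinates agree definitionally)
    (∀ (a a' : α) (b b' : β) (c c' : γ)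
        (hI : farr g (b, c) (b', c') ∈ FSet g),
      fmul (gbar f hb1 hgc hgm (arr c c')).val
          (farr (fbar f hb1) (gbar f hb1 hgc hgm (arr c c')).val
            (farr (fbar f hb1) (a, b) (a', b')))
        = (hmeet (f ⟨farr g (b, c) (b', c'), hI⟩) (arr a a'),
            (farr g (b, c) (b', c')).1)) ∧
    -- (5) the rebracketing `Γ` is a bijection of the underlying sets
    (∃ Γ : {q : α × ↥(FSet g) // hle q.1 (f q.2)} ≃
        {q : ↥(FSet (fbar f hb1)) × γ //
          farr (fbar f hb1) q.1.val (gbar f hb1 hgc hgm q.2).val = ((1 : α), (1 : β))},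
      ∀ q, ((Γ q).val.1.val, (Γ q).val.2)
            = ((q.val.1, q.val.2.val.1), q.val.2.val.2)) := by
  -- Part (1): `f̄` is a product morphism
  have hFP : IsProdMorphism (fbar f hb1) := by
    constructor
    · exact hf1
    · intro x y
      have hm := mem_fmul hg (hb1 x) (hb1 y)
      have hw := mem_fmul_farr hg ((y, 1) : β × γ) (hb1 x)
      obtain ⟨h1, h2, h3⟩ := hf2 ⟨(x, 1), hb1 x⟩ ⟨(y, 1), hb1 y⟩ hm hw
      have ev : fmul ((x, 1) : β × γ) (y, 1) = (x * y, 1) := by simp [fmul]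
      have ew : fmul ((x, 1) : β × γ) (farr g (x, 1) (y, 1)) = (hmeet x y, 1) := by
        simp [fmul, farr, hmeet, arr_self, hg.1, one_arr]
      refine ⟨?_, ?_, ?_⟩
      · exact h1.trans (fcong f hm (hb1 (x * y)) ev)
      · exact (fcong f (hb1 (x * y)) hm ev.symm).trans h2
      · exact h3.trans (fcong f hw (hb1 (hmeet x y)) ew)
  -- Part (2): `ḡ` is a product morphism
  have part2a : (gbar f hb1 hgc hgm 1).val = ((1 : α), (1 : β)) := by
    show (f ⟨(g 1, 1), hgc 1⟩, g 1) = ((1 : α), (1 : β))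
    rw [fcong f (hgc 1) hmem1 (by rw [hg.1]), hf1, hg.1]
  have part2cd : ∀ c d : γ,
      (gbar f hb1 hgc hgm (c * d)).val
          = fmul (gbar f hb1 hgc hgm c).val (gbar f hb1 hgc hgm d).val ∧
      fmul (gbar f hb1 hgc hgm c).val (gbar f hb1 hgc hgm d).val
          = fmul (gbar f hb1 hgc hgm c).val
              (farr (fbar f hb1) (gbar f hb1 hgc hgm c).val (gbar f hb1 hgc hgm d).val) ∧
      (gbar f hb1 hgc hgm (hmeet c d)).val
          = fmul (gbar f hb1 hgc hgm c).val
              (farr (fbar f hb1) (gbar f hb1 hgc hgm c).val (gbar f hb1 hgc hgm d).val) := by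
    intro c d
    have hmc := mem_fmul hg (hgc c) (hgc d)
    have hwc := mem_fmul_farr hg ((g d, d) : β × γ) (hgc c)
    obtain ⟨h1, h2, h3⟩ := hf2 ⟨(g c, c), hgc c⟩ ⟨(g d, d), hgc d⟩ hmc hwc
    have hbd : hle (f ⟨(g d, d), hgc d⟩) (fbar f hb1 (g d)) := hgm d
    have hstar := pm_star hFP (a := f ⟨(g c, c), hgc c⟩) (x := g c) hbd
    have estar : fmul ((g c, c) : β × γ) (farr g (g c, c) (g d, d))
        = (g (hmeet c d), hmeet c d) := by
      show (g c * hmeet (g (arr c d)) (arr (g c) (g d)), c * arr c d) = _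
      rw [pm_star hg (hle_refl (g d)), pm_meet2 hg]
      rfl
    refine ⟨?_, ?_, ?_⟩
    · refine Prod.ext ?_ ?_
      · exact (fcong f (hgc (c * d)) hmc (by rw [← pm_mul hg]; rfl)).trans h1.symm
      · exact (pm_mul hg c d).symm
    · refine Prod.ext ?_ ?_
      · exact ((h1.trans h2)).trans hstar.symm
      · exact (pm_mul hg c d).trans (pm_meet1 hg c d)
    · refine Prod.ext ?_ ?_
      · exact ((fcong f (hgc (hmeet c d)) hwc estar.symm).trans h3.symm).trans hstar.symm
      · exact (pm_meet2 hg c d).symm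
  -- Part (3)
  have part3 : ∀ (a : α) (b : β) (c : γ) (hbc : ((b, c) : β × γ) ∈ FSet g),
      hle a (f ⟨(b, c), hbc⟩) ↔
        (((a, b) : α × β) ∈ FSet (fbar f hb1) ∧
          farr (fbar f hb1) (a, b) (gbar f hb1 hgc hgm c).val = ((1 : α), (1 : β))) := by
    intro a b c hbc
    have hbgc : arr b (g c) = 1 := hbc
    have hw := mem_fmul_farr hg ((g c, c) : β × γ) (hb1 b)
    have h3 := (hf2 ⟨(b, 1), hb1 b⟩ ⟨(g c, c), hgc c⟩ (mem_fmul hg (hb1 b) (hgc c)) hw).2.2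
    have eval : fmul ((b, 1) : β × γ) (farr g (b, 1) (g c, c)) = (b, c) := by
      show (b * hmeet (g (arr 1 c)) (arr b (g c)), 1 * arr 1 c) = _
      rw [one_arr, hbgc, hmeet_one, one_mul, mul_comm b (g c),
        idem_mul_of_hle (pm_idem hg c) (show hle b (g c) from hbc)]
    have meetEq : hmeet (f ⟨(b, 1), hb1 b⟩) (f ⟨(g c, c), hgc c⟩) = f ⟨(b, c), hbc⟩ :=
      h3.trans (fcong f hw hbc eval)
    have farrEq : farr (fbar f hb1) ((a, b) : α × β) (gbar f hb1 hgc hgm c).val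
        = (arr a (f ⟨(g c, c), hgc c⟩), 1) := by
      show (hmeet (fbar f hb1 (arr b (g c))) (arr a (f ⟨(g c, c), hgc c⟩)), arr b (g c)) = _
      rw [hbgc, hFP.1, one_hmeet]
    constructor
    · intro h
      rw [← meetEq] at h
      obtain ⟨ha1, ha2⟩ := hle_hmeet_iff.mp h
      refine ⟨ha1, ?_⟩
      rw [farrEq, show arr a (f ⟨(g c, c), hgc c⟩) = 1 from ha2]
    · rintro ⟨h1, h2⟩
      rw [farrEq] at h2
      have ha2 : hle a (f ⟨(g c, c), hgc c⟩) := congrArg Prod.fst h2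
      rw [← meetEq]
      exact hle_hmeet h1 ha2
  -- Part (4)
  have part4 : ∀ (a a' : α) (b b' : β) (c c' : γ)
      (hI : farr g (b, c) (b', c') ∈ FSet g),
      fmul (gbar f hb1 hgc hgm (arr c c')).val
          (farr (fbar f hb1) (gbar f hb1 hgc hgm (arr c c')).val
            (farr (fbar f hb1) (a, b) (a', b')))
        = (hmeet (f ⟨farr g (b, c) (b', c'), hI⟩) (arr a a'),
            (farr g (b, c) (b', c')).1) := by
    intro a a' b b' c c' hI
    have hm := mem_fmul hg (hgc (arr c c')) (hb1 (arr b b'))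
    have hw := mem_fmul_farr hg ((arr b b', 1) : β × γ) (hgc (arr c c'))
    have h3 := (hf2 ⟨(g (arr c c'), arr c c'), hgc (arr c c')⟩
      ⟨(arr b b', 1), hb1 (arr b b')⟩ hm hw).2.2
    have eval2 : fmul ((g (arr c c'), arr c c') : β × γ)
        (farr g (g (arr c c'), arr c c') (arr b b', 1))
        = (hmeet (g (arr c c')) (arr b b'), arr c c') := by
      show (g (arr c c') * hmeet (g (arr (arr c c') 1)) (arr (g (arr c c')) (arr b b')),
        arr c c' * arr (arr c c') 1) = _
      rw [arr_one, hg.1, one_hmeet, mul_one]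
      rfl
    have fEq : f ⟨farr g (b, c) (b', c'), hI⟩
        = hmeet (f ⟨(g (arr c c'), arr c c'), hgc (arr c c')⟩) (fbar f hb1 (arr b b')) :=
      (fcong f hI hw eval2.symm).trans h3.symm
    refine Prod.ext ?_ ?_
    · show f ⟨(g (arr c c'), arr c c'), hgc (arr c c')⟩
        * hmeet (fbar f hb1 (arr (g (arr c c')) (arr b b')))
            (arr (f ⟨(g (arr c c'), arr c c'), hgc (arr c c')⟩)
              (hmeet (fbar f hb1 (arr b b')) (arr a a'))) = _
      rw [pm_star hFP (x := g (arr c c'))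
        (hmeet_le_left (fbar f hb1 (arr b b')) (arr a a')), fEq, hmeet_assoc]
    · rfl
  refine ⟨hFP, ⟨part2a, part2cd⟩, part3, part4, ?_⟩
  -- Part (5)
  refine ⟨⟨fun q =>
      ⟨(⟨(q.val.1, q.val.2.val.1),
          ((part3 q.val.1 q.val.2.val.1 q.val.2.val.2 q.val.2.prop).mp q.prop).1⟩,
        q.val.2.val.2),
        ((part3 q.val.1 q.val.2.val.1 q.val.2.val.2 q.val.2.prop).mp q.prop).2⟩,
    fun r =>
      have hbgc : ((r.val.1.val.2, r.val.2) : β × γ) ∈ FSet g := congrArg Prod.snd r.prop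
      ⟨(r.val.1.val.1, ⟨(r.val.1.val.2, r.val.2), hbgc⟩),
        (part3 r.val.1.val.1 r.val.1.val.2 r.val.2 hbgc).mpr ⟨r.val.1.prop, r.prop⟩⟩,
    fun q => rfl, fun r => rfl⟩, fun q => rfl⟩

end Hoop
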